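/- arXiv:2505.19289 — 2 statements merged into one kernel-verified Lean document; each statement's English description precedes it below -/
import Mathlib

section
/- Let 0 < α < 2/b_max, μ > 0, and 0 < r < 1. Then ∫_{ℝⁿ \ Θ^{μβ}_r} ‖y‖_β^{-(c_β + 2α)} dy < ∞, where c_β = ∑_i 2/b_i is the anisotropic dimension. -/
open MeasureTheory Finset

noncomputable def anorm {n : ℕ} (β x : Fin n → ℝ) : ℝ :=
  (∑ i, |x i| ^ (β i)) ^ ((1 : ℝ) / 2)

lemma anorm_nonneg {n : ℕ} (β x : Fin n → ℝ) : 0 ≤ anorm β x :=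
  Real.rpow_nonneg (Finset.sum_nonneg fun _ _ => Real.rpow_nonneg (abs_nonneg _) _) _

lemma measurable_anorm {n : ℕ} (β : Fin n → ℝ) : Measurable (anorm β) :=
  ((Finset.measurable_sum _ fun i _ =>
    ((measurable_pi_apply i).abs).pow measurable_const)).pow measurable_const

/-- geometric rewriting: `(2^k * r)^s = (2^s)^k * r^s`. -/
lemma geom_rpow (r s : ℝ) (hr : 0 < r) (k : ℕ) :
    ((2:ℝ)^k * r) ^ s = ((2:ℝ) ^ s) ^ k * r ^ s := by
  rw [Real.mul_rpow (by positivity) hr.le, ← Real.rpow_natCast (2:ℝ) k,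
    ← Real.rpow_mul (by norm_num), mul_comm (k:ℝ) s, Real.rpow_mul (by norm_num),
    Real.rpow_natCast]

theorem integrable_kernel_outside (n : ℕ) (β : Fin n → ℝ) (hβ : ∀ i, 0 < β i)
    (bmax : ℝ) (hbmax : ∀ i, β i ≤ bmax) (hbm : ∃ i, β i = bmax)
    (α : ℝ) (hα : 0 < α) (hα' : α < 2 / bmax)
    (μ : ℝ) (hμ : 0 < μ) (r : ℝ) (hr : 0 < r) (hr1 : r < 1) :
    IntegrableOn
      (fun y : Fin n → ℝ => anorm β y ^ (-((∑ i, 2 / β i) + 2 * α)))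
      {y : Fin n → ℝ | r ≤ anorm (fun i => μ * β i) y} volume := by
  classical
  rcases Nat.eq_zero_or_pos n with hn | hn
  · subst hn
    have hempty : {y : Fin 0 → ℝ | r ≤ anorm (fun i => μ * β i) y} = ∅ := by
      ext y
      simp only [Set.mem_setOf_eq, Set.mem_empty_iff_false, iff_false, not_le, anorm]
      rw [show (∑ i : Fin 0, |y i| ^ (μ * β i)) = 0 from rfl, Real.zero_rpow (by norm_num)]
      exact hr
    rw [hempty]
    exact integrableOn_empty
  -- main case
  have hnR : (0:ℝ) < n := by exact_mod_cast hn
  set c : ℝ := ∑ i, 2 / β i with hc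
  set p : ℝ := c + 2 * α with hp
  have hc0 : 0 < c := Finset.sum_pos (fun i _ => by have := hβ i; positivity)
    ⟨⟨0, hn⟩, Finset.mem_univ _⟩
  have hp0 : 0 < p := by rw [hp]; positivity
  set N : (Fin n → ℝ) → ℝ := anorm (fun i => μ * β i) with hN
  set f : (Fin n → ℝ) → ℝ := fun y => anorm β y ^ (-p) with hf
  set A : ℕ → Set (Fin n → ℝ) :=
    fun k => N ⁻¹' (Set.Icc ((2:ℝ)^k * r) ((2:ℝ)^(k+1) * r)) with hA
  have hAmeas : ∀ k, MeasurableSet (A k) :=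
    fun k => (measurable_anorm _) measurableSet_Icc
  -- covering
  have hcover : {y : Fin n → ℝ | r ≤ N y} ⊆ ⋃ k, A k := by
    intro y hy
    have hy' : r ≤ N y := hy
    have hx1 : (1:ℝ) ≤ N y / r := (one_le_div hr).2 hy'
    have hx0 : (0:ℝ) ≤ N y / r := by linarith
    set m : ℕ := ⌊N y / r⌋₊ with hm
    have hm1 : 1 ≤ m := (Nat.one_le_floor_iff _).2 hx1
    set k : ℕ := Nat.log 2 m with hk
    refine Set.mem_iUnion.2 ⟨k, ?_, ?_⟩
    · -- 2^k * r ≤ N y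
      have h1 : (2:ℕ)^k ≤ m := Nat.pow_log_le_self 2 (by omega)
      have h2 : ((2:ℝ))^k ≤ (m : ℝ) := by exact_mod_cast h1
      have h3 : (m : ℝ) ≤ N y / r := Nat.floor_le hx0
      have : (2:ℝ)^k ≤ N y / r := le_trans h2 h3
      calc (2:ℝ)^k * r ≤ (N y / r) * r := by
            exact mul_le_mul_of_nonneg_right this hr.le
        _ = N y := div_mul_cancel₀ _ hr.ne'
    · -- N y ≤ 2^(k+1) * r
      have h1 : m < 2^(k+1) := Nat.lt_pow_succ_log_self (by norm_num) m
      have h2 : (m : ℝ) + 1 ≤ (2:ℝ)^(k+1) := by exact_mod_cast Nat.succ_le_of_lt h1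
      have h3 : N y / r < (m : ℝ) + 1 := Nat.lt_floor_add_one _
      have h4 : N y / r ≤ (2:ℝ)^(k+1) := le_trans h3.le h2
      calc N y = (N y / r) * r := (div_mul_cancel₀ _ hr.ne').symm
        _ ≤ (2:ℝ)^(k+1) * r := mul_le_mul_of_nonneg_right h4 hr.le
  -- pointwise lower bound on anorm β y on A k
  have hlow : ∀ k : ℕ, ∀ y ∈ A k,
      (((2:ℝ)^k * r) ^ (2:ℝ) / n) ^ (1/(2*μ)) ≤ anorm β y := by
    intro k y hy
    set t : ℝ := (2:ℝ)^k * r with ht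
    have ht0 : 0 < t := by positivity
    have hty : t ≤ N y := hy.1
    have hsum0 : (0:ℝ) ≤ ∑ i, |y i| ^ (μ * β i) :=
      Finset.sum_nonneg fun _ _ => Real.rpow_nonneg (abs_nonneg _) _
    have hsq : t ^ (2:ℝ) ≤ ∑ i, |y i| ^ (μ * β i) := by
      have h1 : t ^ (2:ℝ) ≤ (N y) ^ (2:ℝ) :=
        Real.rpow_le_rpow ht0.le hty (by norm_num)
      have h2 : (N y) ^ (2:ℝ) = ∑ i, |y i| ^ (μ * β i) := by
        rw [hN]
        show ((∑ i, |y i| ^ (μ * β i)) ^ ((1:ℝ)/2)) ^ (2:ℝ) = _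
        rw [← Real.rpow_mul hsum0]
        norm_num
      rwa [h2] at h1
    -- find a large coordinate
    have hsum' : ∑ _i : Fin n, (t ^ (2:ℝ) / n) ≤ ∑ i, |y i| ^ (μ * β i) := by
      rw [Finset.sum_const, Finset.card_univ, Fintype.card_fin, nsmul_eq_mul]
      rw [mul_div_cancel₀ _ hnR.ne']
      exact hsq
    obtain ⟨i, _, hi⟩ := Finset.exists_le_of_sum_le ⟨⟨0, hn⟩, Finset.mem_univ _⟩ hsum'
    -- |y i| ^ (β i) ≥ (t^2/n)^(1/μ)
    have htn0 : (0:ℝ) ≤ t ^ (2:ℝ) / n := by positivity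
    have hstep : (t ^ (2:ℝ) / n) ^ (1/μ) ≤ |y i| ^ (β i) := by
      have h1 : |y i| ^ (μ * β i) = (|y i| ^ (β i)) ^ μ := by
        rw [mul_comm μ (β i), Real.rpow_mul (abs_nonneg _)]
      have h2 : (t ^ (2:ℝ) / n) ^ (1/μ) ≤ ((|y i| ^ (β i)) ^ μ) ^ (1/μ) :=
        Real.rpow_le_rpow htn0 (h1 ▸ hi) (by positivity)
      rwa [← Real.rpow_mul (Real.rpow_nonneg (abs_nonneg _) _),
        mul_one_div_cancel hμ.ne', Real.rpow_one] at h2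
    have hterm : |y i| ^ (β i) ≤ ∑ j, |y j| ^ (β j) :=
      Finset.single_le_sum (fun j _ => Real.rpow_nonneg (abs_nonneg _) _) (Finset.mem_univ i)
    have : ((t ^ (2:ℝ) / n) ^ (1/μ)) ^ ((1:ℝ)/2) ≤ anorm β y :=
      Real.rpow_le_rpow (Real.rpow_nonneg htn0 _) (le_trans hstep hterm) (by norm_num)
    rwa [← Real.rpow_mul htn0, show (1/μ) * ((1:ℝ)/2) = 1/(2*μ) by ring] at this
  -- volume bound for A k
  have hvol : ∀ k : ℕ, volume (A k) ≤
      ENNReal.ofReal (∏ i, (2 * ((2:ℝ)^(k+1) * r) ^ (2 / (μ * β i)))) := by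
    intro k
    set R : ℝ := (2:ℝ)^(k+1) * r with hR
    have hR0 : 0 < R := by positivity
    have hsub : A k ⊆ Set.pi Set.univ (fun i =>
        Set.Icc (-(R ^ (2 / (μ * β i)))) (R ^ (2 / (μ * β i)))) := by
      intro y hy
      have hNy : N y ≤ R := hy.2
      have hsum0 : (0:ℝ) ≤ ∑ i, |y i| ^ (μ * β i) :=
        Finset.sum_nonneg fun _ _ => Real.rpow_nonneg (abs_nonneg _) _
      have hsq : ∑ i, |y i| ^ (μ * β i) ≤ R ^ (2:ℝ) := by
        have h1 : (N y) ^ (2:ℝ) ≤ R ^ (2:ℝ) :=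
          Real.rpow_le_rpow (anorm_nonneg _ _) hNy (by norm_num)
        have h2 : (N y) ^ (2:ℝ) = ∑ i, |y i| ^ (μ * β i) := by
          rw [hN]
          show ((∑ i, |y i| ^ (μ * β i)) ^ ((1:ℝ)/2)) ^ (2:ℝ) = _
          rw [← Real.rpow_mul hsum0]
          norm_num
        rwa [h2] at h1
      intro i _
      have hμβ : 0 < μ * β i := by have := hβ i; positivity
      have hterm : |y i| ^ (μ * β i) ≤ R ^ (2:ℝ) :=
        le_trans (Finset.single_le_sum (f := fun j => |y j| ^ (μ * β j))
          (fun j _ => Real.rpow_nonneg (abs_nonneg _) _) (Finset.mem_univ i)) hsq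
      have habs : |y i| ≤ R ^ (2 / (μ * β i)) := by
        have h2 : (|y i| ^ (μ * β i)) ^ (1/(μ * β i)) ≤ (R ^ (2:ℝ)) ^ (1/(μ * β i)) :=
          Real.rpow_le_rpow (Real.rpow_nonneg (abs_nonneg _) _) hterm (by positivity)
        rwa [← Real.rpow_mul (abs_nonneg _), mul_one_div_cancel hμβ.ne', Real.rpow_one,
          ← Real.rpow_mul hR0.le, show (2:ℝ) * (1/(μ * β i)) = 2 / (μ * β i) by ring] at h2
      exact abs_le.mp habs
    calc volume (A k) ≤ volume (Set.pi Set.univ (fun i =>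
          Set.Icc (-(R ^ (2 / (μ * β i)))) (R ^ (2 / (μ * β i))))) :=
        measure_mono hsub
      _ = ∏ i, volume (Set.Icc (-(R ^ (2 / (μ * β i)))) (R ^ (2 / (μ * β i)))) :=
        volume_pi_pi _
      _ = ∏ i, ENNReal.ofReal (2 * R ^ (2 / (μ * β i))) := by
        refine Finset.prod_congr rfl fun i _ => ?_
        rw [Real.volume_Icc]
        congr 1
        ring
      _ = ENNReal.ofReal (∏ i, (2 * R ^ (2 / (μ * β i)))) :=
        (ENNReal.ofReal_prod_of_nonneg fun i _ => by positivity).symm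
  -- the summable bound
  set s : ℝ := -(2*α) / μ with hs
  set g : ℕ → ℝ := fun k =>
    ((((2:ℝ)^k * r) ^ (2:ℝ) / n) ^ (1/(2*μ))) ^ (-p) *
      (∏ i, (2 * ((2:ℝ)^(k+1) * r) ^ (2 / (μ * β i)))) with hg
  have hg_nonneg : ∀ k, 0 ≤ g k := by
    intro k
    have h1 : (0:ℝ) ≤ ((((2:ℝ)^k * r) ^ (2:ℝ) / n) ^ (1/(2*μ))) ^ (-p) :=
      Real.rpow_nonneg (Real.rpow_nonneg (by positivity) _) _
    have h2 : (0:ℝ) ≤ ∏ i, (2 * ((2:ℝ)^(k+1) * r) ^ (2 / (μ * β i))) :=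
      Finset.prod_nonneg fun i _ => by positivity
    exact mul_nonneg h1 h2
  have hsumc : ∑ i, 2 / (μ * β i) = c / μ := by
    rw [hc, Finset.sum_div]
    refine Finset.sum_congr rfl fun i _ => ?_
    rw [div_div]
    congr 1
    ring
  -- closed form for g
  have hkey : ∀ u : ℝ, 0 < u →
      (((u ^ (2:ℝ) / n) ^ (1/(2*μ))) ^ (-p)) * (∏ i, (2 * (2*u) ^ (2 / (μ * β i)))) =
        (n ^ (p/(2*μ)) * (2^n * 2 ^ (c/μ))) * u ^ s := by
    intro u hu
    have hu2n : (0:ℝ) ≤ u ^ (2:ℝ) / n := by positivity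
    have h2u : (0:ℝ) < 2 * u := by positivity
    rw [← Real.rpow_mul hu2n, Real.div_rpow (by positivity) hnR.le,
      ← Real.rpow_mul hu.le]
    rw [Finset.prod_mul_distrib, Finset.prod_const, Finset.card_univ, Fintype.card_fin,
      ← Real.rpow_sum_of_pos h2u, hsumc,
      Real.mul_rpow (by norm_num) hu.le]
    rw [div_eq_mul_inv (u ^ (2 * (1/(2*μ) * (-p)))), ← Real.rpow_neg hnR.le]
    have hexp : 2 * (1/(2*μ) * (-p)) + c/μ = s := by
      rw [hs, hp]
      field_simp
      ring
    have hnexp : -(1/(2*μ) * (-p)) = p/(2*μ) := by ring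
    rw [hnexp]
    calc u ^ (2 * (1/(2*μ) * (-p))) * n ^ (p/(2*μ)) *
          (2^n * ((2:ℝ) ^ (c/μ) * u ^ (c/μ)))
        = (n ^ (p/(2*μ)) * (2^n * (2:ℝ) ^ (c/μ))) *
            (u ^ (2 * (1/(2*μ) * (-p))) * u ^ (c/μ)) := by ring
      _ = (n ^ (p/(2*μ)) * (2^n * (2:ℝ) ^ (c/μ))) * u ^ s := by
          rw [← Real.rpow_add hu, hexp]
  have hg_eq : ∀ k, g k =
      ((n ^ (p/(2*μ)) * (2^n * (2:ℝ) ^ (c/μ))) * r ^ s) * ((2:ℝ) ^ s) ^ k := by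
    intro k
    have h2 : (2:ℝ)^(k+1) * r = 2 * ((2:ℝ)^k * r) := by rw [pow_succ]; ring
    have hu : (0:ℝ) < (2:ℝ)^k * r := by positivity
    rw [hg]
    simp only [h2]
    rw [hkey _ hu, geom_rpow r s hr k]
    ring
  have hw0 : (0:ℝ) ≤ (2:ℝ) ^ s := Real.rpow_nonneg (by norm_num) _
  have hw1 : (2:ℝ) ^ s < 1 := by
    apply Real.rpow_lt_one_of_one_lt_of_neg (by norm_num)
    rw [hs]
    have : (0:ℝ) < 2 * α := by positivity
    exact div_neg_of_neg_of_pos (by linarith) hμ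
  have hg_summable : Summable g := by
    have : Summable fun k : ℕ => ((2:ℝ) ^ s) ^ k := summable_geometric_of_lt_one hw0 hw1
    exact (this.mul_left _).congr fun k => (hg_eq k).symm
  -- integrability
  have hfm : Measurable f := (measurable_anorm β).pow measurable_const
  constructor
  · exact (hfm.aestronglyMeasurable).restrict
  · rw [hasFiniteIntegral_iff_ofReal]
    swap
    · exact Filter.Eventually.of_forall fun y => Real.rpow_nonneg (anorm_nonneg _ _) _
    have hbound : ∀ k : ℕ, ∫⁻ y in A k, ENNReal.ofReal (f y) ≤ ENNReal.ofReal (g k) := by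
      intro k
      set M : ℝ := ((((2:ℝ)^k * r) ^ (2:ℝ) / n) ^ (1/(2*μ))) ^ (-p) with hM
      have hL0 : (0:ℝ) < (((2:ℝ)^k * r) ^ (2:ℝ) / n) ^ (1/(2*μ)) :=
        Real.rpow_pos_of_pos (by positivity) _
      have hM0 : (0:ℝ) ≤ M := Real.rpow_nonneg hL0.le _
      calc ∫⁻ y in A k, ENNReal.ofReal (f y)
          ≤ ∫⁻ _ in A k, ENNReal.ofReal M := by
            refine setLIntegral_mono' (hAmeas k) fun y hy => ?_
            refine ENNReal.ofReal_le_ofReal ?_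
            exact Real.rpow_le_rpow_of_nonpos hL0 (hlow k y hy) (by linarith)
        _ = ENNReal.ofReal M * volume (A k) := setLIntegral_const _ _
        _ ≤ ENNReal.ofReal M *
              ENNReal.ofReal (∏ i, (2 * ((2:ℝ)^(k+1) * r) ^ (2 / (μ * β i)))) :=
            mul_le_mul_right (hvol k) _
        _ = ENNReal.ofReal (g k) := by
            rw [← ENNReal.ofReal_mul hM0]
    calc ∫⁻ y in {y : Fin n → ℝ | r ≤ N y}, ENNReal.ofReal (f y)
        ≤ ∫⁻ y in ⋃ k, A k, ENNReal.ofReal (f y) := lintegral_mono_set hcover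
      _ ≤ ∑' k, ∫⁻ y in A k, ENNReal.ofReal (f y) := lintegral_iUnion_le _ _
      _ ≤ ∑' k, ENNReal.ofReal (g k) := ENNReal.tsum_le_tsum hbound
      _ = ENNReal.ofReal (∑' k, g k) :=
          (ENNReal.ofReal_tsum_of_nonneg hg_nonneg hg_summable).symm
      _ < ⊤ := ENNReal.ofReal_lt_top
end

section
/- Let 0 < α < 2/b_max, μ > 0, and 0 < r < 1. Then ∫_{Θ^{μβ}_r} |y|² ‖y‖_β^{-(c_β + 2α)} dy < ∞, where |y| is the Euclidean norm and c_β = ∑_i 2/b_i. -/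
open MeasureTheory Finset

lemma int1d {p : ℝ} (hp : -1 < p) :
    MeasureTheory.Integrable ((Set.Ioo (-1:ℝ) 1).indicator (fun x => |x| ^ p)) := by
  rw [integrable_indicator_iff measurableSet_Ioo]
  have h1 : IntegrableOn (fun x : ℝ => |x| ^ p) (Set.Ioo 0 1) := by
    refine ((intervalIntegral.integrableOn_Ioo_rpow_iff one_pos).mpr hp).congr_fun ?_
      measurableSet_Ioo
    intro x hx; show x ^ p = |x| ^ p; rw [abs_of_pos hx.1]
  have h2 : IntegrableOn (fun x : ℝ => |x| ^ p) (Set.Ioo (-1) 0) := by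
    have key := (Measure.measurePreserving_neg (volume : Measure ℝ)).integrableOn_comp_preimage
      (MeasurableEquiv.neg ℝ).measurableEmbedding (s := Set.Ioo (-1:ℝ) 0)
      (f := fun x : ℝ => |x| ^ p)
    have hpre : (Neg.neg : ℝ → ℝ) ⁻¹' Set.Ioo (-1:ℝ) 0 = Set.Ioo 0 1 := by
      ext x
      simp only [Set.mem_preimage, Set.mem_Ioo]
      constructor
      · rintro ⟨ha, hb⟩; constructor <;> linarith
      · rintro ⟨ha, hb⟩; constructor <;> linarith
    rw [hpre] at key
    rw [← key]
    refine h1.congr_fun ?_ measurableSet_Ioo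
    intro x hx; simp [Function.comp, abs_neg]
  have h1' : IntegrableOn (fun x : ℝ => |x| ^ p) (Set.Ico 0 1) :=
    h1.congr_set_ae Ioo_ae_eq_Ico.symm
  have := h2.union h1'
  rwa [Set.Ioo_union_Ico_eq_Ioo (by norm_num) (by norm_num)] at this

theorem integrable_kernel_inside (n : ℕ) (β : Fin n → ℝ) (hβ : ∀ i, 0 < β i)
    (bmax : ℝ) (hbmax : ∀ i, β i ≤ bmax) (hbm : ∃ i, β i = bmax)
    (α : ℝ) (hα : 0 < α) (hα' : α < 2 / bmax)
    (μ : ℝ) (hμ : 0 < μ) (r : ℝ) (hr : 0 < r) (hr1 : r < 1) :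
    IntegrableOn
      (fun y : Fin n → ℝ =>
        (∑ i, (y i) ^ 2) * anorm β y ^ (-((∑ i, 2 / β i) + 2 * α)))
      {y : Fin n → ℝ | anorm (fun i => μ * β i) y < r} volume := by
  obtain ⟨i0, hi0⟩ := hbm
  have hbmax_pos : 0 < bmax := hi0 ▸ hβ i0
  have hba : bmax * α < 2 := by
    rw [lt_div_iff₀ hbmax_pos] at hα'; linarith
  set ε : ℝ := min (1/(2*bmax)) ((2 - bmax*α)/(2*bmax*(n+1))) with hεdef
  have hε : 0 < ε := by
    apply lt_min (by positivity)
    have : (0:ℝ) < 2 - bmax*α := by linarith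
    positivity
  have hε2 : bmax * ((n:ℝ) * ε) ≤ (2 - bmax*α)/2 := by
    have h1 : ε ≤ (2 - bmax*α)/(2*bmax*(n+1)) := min_le_right _ _
    have hn1 : (0:ℝ) < (n:ℝ)+1 := by positivity
    have : bmax * ((n:ℝ) * ε) ≤ bmax * (((n:ℝ)+1) * ((2 - bmax*α)/(2*bmax*((n:ℝ)+1)))) := by
      apply mul_le_mul_of_nonneg_left _ hbmax_pos.le
      apply mul_le_mul (by linarith) h1 hε.le (by positivity)
    calc bmax * ((n:ℝ) * ε) ≤ bmax * (((n:ℝ)+1) * ((2 - bmax*α)/(2*bmax*((n:ℝ)+1)))) := this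
      _ = (2 - bmax*α)/2 := by field_simp
  -- weights
  set s : Fin n → Fin n → ℝ :=
    fun j i => if i = j then 1/β j + α + ((n:ℝ)-1)*ε else 1/β i - ε with hsdef
  set p : Fin n → Fin n → ℝ :=
    fun j i => (if i = j then (2:ℝ) else 0) - β i * s j i with hpdef
  have hεb : ∀ i, ε ≤ 1/β i := by
    intro i
    calc ε ≤ 1/(2*bmax) := min_le_left _ _
      _ ≤ 1/bmax := by
          apply one_div_le_one_div_of_le hbmax_pos; linarith
      _ ≤ 1/β i := one_div_le_one_div_of_le (hβ i) (hbmax i)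
  have hs_nonneg : ∀ j i, 0 ≤ s j i := by
    intro j i
    simp only [hsdef]
    have hn1 : (1:ℝ) ≤ (n:ℝ) := by exact_mod_cast Nat.one_le_iff_ne_zero.mpr i.pos.ne'
    split_ifs with h
    · have h1 : 0 < 1/β j := one_div_pos.mpr (hβ j)
      have h2 : 0 ≤ ((n:ℝ)-1)*ε := mul_nonneg (by linarith) hε.le
      linarith
    · linarith [hεb i]
  have hp_gt : ∀ j i, -1 < p j i := by
    intro j i
    simp only [hpdef, hsdef]
    split_ifs with h
    · subst h
      have hn1 : (1:ℝ) ≤ (n:ℝ) := by exact_mod_cast Nat.one_le_iff_ne_zero.mpr i.pos.ne'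
      have hb1 : β i * (1/β i) = 1 := mul_one_div_cancel (ne_of_gt (hβ i))
      have h2 : β i * α ≤ bmax * α := mul_le_mul_of_nonneg_right (hbmax i) hα.le
      have h3 : β i * (((n:ℝ)-1)*ε) ≤ bmax * ((n:ℝ)*ε) := by
        apply mul_le_mul (hbmax i) _ _ hbmax_pos.le
        · apply mul_le_mul_of_nonneg_right _ hε.le
          simp
        · exact mul_nonneg (by linarith) hε.le
      have hexp : β i * (1/β i + α + ((n:ℝ)-1)*ε)
          = 1 + β i * α + β i * (((n:ℝ)-1)*ε) := by
        rw [mul_add, mul_add, hb1]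
      rw [hexp]
      have := hε2
      linarith
    · have hb1 : β i * (1/β i) = 1 := mul_one_div_cancel (ne_of_gt (hβ i))
      have heq : β i * (1/β i - ε) = 1 - β i * ε := by rw [mul_sub, hb1]
      rw [heq]
      have : 0 < β i * ε := mul_pos (hβ i) hε
      linarith
  have hsum : ∀ j, ∑ i, s j i = (∑ i, 1/β i) + α := by
    intro j
    have : ∀ i, s j i = (1/β i - ε) + (if i = j then α + (n:ℝ)*ε else 0) := by
      intro i
      simp only [hsdef]
      split_ifs with h
      · subst h; ring
      · ring
    rw [Finset.sum_congr rfl (fun i _ => this i), Finset.sum_add_distrib]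
    rw [Finset.sum_ite_eq' Finset.univ j (fun _ => α + (n:ℝ)*ε)]
    simp only [Finset.mem_univ, if_true, Finset.sum_sub_distrib, Finset.sum_const,
      Finset.card_univ, Fintype.card_fin, nsmul_eq_mul]
    ring
  -- key pointwise bound
  have key : ∀ y : Fin n → ℝ, (∀ i, y i ≠ 0) →
      (∑ i, (y i)^2) * anorm β y ^ (-((∑ i, 2/β i) + 2*α)) ≤ ∑ j, ∏ i, |y i| ^ p j i := by
    intro y hy
    set A := ∑ i, |y i| ^ β i with hAdef
    have hAp : 0 < A := Finset.sum_pos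
      (fun i _ => Real.rpow_pos_of_pos (abs_pos.mpr (hy i)) _) ⟨i0, Finset.mem_univ i0⟩
    have hanorm : anorm β y ^ (-((∑ i, 2/β i) + 2*α)) = A ^ (-((∑ i, 1/β i) + α)) := by
      rw [anorm, ← hAdef, ← Real.rpow_mul hAp.le]
      congr 1
      have h2 : ∑ i, (1:ℝ)/β i = (1/2) * ∑ i, 2/β i := by
        rw [Finset.mul_sum]
        exact Finset.sum_congr rfl fun i _ => by ring
      rw [h2]; ring
    rw [Finset.sum_mul]
    apply Finset.sum_le_sum
    intro j _
    have h1 : anorm β y ^ (-((∑ i, 2/β i) + 2*α)) = ∏ i, A ^ (-(s j i)) := by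
      rw [hanorm, ← hsum j, ← Real.rpow_sum_of_pos hAp]
      congr 1
      rw [← Finset.sum_neg_distrib]
    have h2 : ∏ i, A ^ (-(s j i)) ≤ ∏ i, |y i| ^ (-(β i * s j i)) := by
      apply Finset.prod_le_prod
      · intro i _; exact Real.rpow_nonneg hAp.le _
      · intro i _
        have hyi : 0 < |y i| ^ β i := Real.rpow_pos_of_pos (abs_pos.mpr (hy i)) _
        have hle : |y i| ^ β i ≤ A := Finset.single_le_sum
          (fun i _ => Real.rpow_nonneg (abs_nonneg _) _) (Finset.mem_univ i)
        have hh := Real.rpow_le_rpow_of_nonpos hyi hle (neg_nonpos.mpr (hs_nonneg j i))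
        rwa [← Real.rpow_mul (abs_nonneg _), mul_neg] at hh
    have h3 : (y j)^2 * ∏ i, |y i| ^ (-(β i * s j i)) = ∏ i, |y i| ^ p j i := by
      have hterm : ∀ i, |y i| ^ p j i
          = (if i = j then (y j)^2 else 1) * |y i| ^ (-(β i * s j i)) := by
        intro i
        have hpi : p j i = (if i = j then (2:ℝ) else 0) + (-(β i * s j i)) := by
          simp only [hpdef]; ring
        rw [hpi, Real.rpow_add (abs_pos.mpr (hy i))]
        congr 1
        split_ifs with h
        · subst h
          rw [show ((2:ℝ)) = ((2:ℕ):ℝ) by norm_num, Real.rpow_natCast, sq_abs]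
        · exact Real.rpow_zero _
      rw [Finset.prod_congr rfl (fun i _ => hterm i), Finset.prod_mul_distrib,
        Finset.prod_ite_eq' Finset.univ j (fun _ => (y j)^2)]
      simp
    calc (y j)^2 * anorm β y ^ (-((∑ i, 2/β i) + 2*α))
        = (y j)^2 * ∏ i, A ^ (-(s j i)) := by rw [h1]
      _ ≤ (y j)^2 * ∏ i, |y i| ^ (-(β i * s j i)) :=
          mul_le_mul_of_nonneg_left h2 (sq_nonneg _)
      _ = ∏ i, |y i| ^ p j i := h3
  -- measurability of the set
  have hcont : Continuous (anorm (fun i => μ * β i)) := by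
    apply Continuous.rpow_const
    · apply continuous_finset_sum
      intro i _
      exact ((continuous_apply i).abs).rpow_const (fun x => Or.inr (mul_nonneg hμ.le (hβ i).le))
    · intro x; right; norm_num
  have hSm : MeasurableSet {y : Fin n → ℝ | anorm (fun i => μ * β i) y < r} :=
    (isOpen_lt hcont continuous_const).measurableSet
  -- membership implies coordinates bounded
  have hmem : ∀ y : Fin n → ℝ, anorm (fun i => μ * β i) y < r → ∀ i, |y i| < 1 := by
    intro y hyS k
    by_contra hcon
    push_neg at hcon
    have hB : (1:ℝ) ≤ ∑ i, |y i| ^ (μ * β i) := by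
      have h1 : (1:ℝ) ≤ |y k| ^ (μ * β k) :=
        Real.one_le_rpow hcon (mul_nonneg hμ.le (hβ k).le)
      calc (1:ℝ) ≤ |y k| ^ (μ * β k) := h1
        _ ≤ ∑ i, |y i| ^ (μ * β i) := Finset.single_le_sum
            (f := fun i => |y i| ^ (μ * β i))
            (fun i _ => Real.rpow_nonneg (abs_nonneg _) _) (Finset.mem_univ k)
    have : (1:ℝ) ≤ anorm (fun i => μ * β i) y := by
      rw [anorm]
      calc (1:ℝ) = (1:ℝ) ^ ((1:ℝ)/2) := (Real.one_rpow _).symm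
        _ ≤ (∑ i, |y i| ^ (μ * β i)) ^ ((1:ℝ)/2) :=
            Real.rpow_le_rpow (by norm_num) hB (by norm_num)
    linarith
  -- the majorant
  set G : (Fin n → ℝ) → ℝ :=
    fun y => ∑ j, ∏ i, ((Set.Ioo (-1:ℝ) 1).indicator (fun x => |x| ^ p j i)) (y i) with hGdef
  have hG : Integrable G := by
    apply integrable_finset_sum
    intro j _
    exact Integrable.fin_nat_prod (fun i => int1d (hp_gt j i))
  -- a.e. nonzero coordinates
  have hnz : ∀ᵐ y : Fin n → ℝ ∂volume, ∀ i, y i ≠ 0 := by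
    rw [ae_all_iff]
    intro i
    rw [volume_pi]
    exact Measure.ae_eval_ne _ i 0
  -- conclude
  apply Integrable.mono' (hG.restrict
    (s := {y : Fin n → ℝ | anorm (fun i => μ * β i) y < r}))
  · apply Measurable.aestronglyMeasurable
    simp only [anorm]
    fun_prop
  · filter_upwards [ae_restrict_mem hSm, ae_restrict_of_ae hnz] with y hyS hy
    have habs : ∀ i, |y i| < 1 := hmem y hyS
    have hfnn : 0 ≤ (∑ i, (y i)^2) * anorm β y ^ (-((∑ i, 2/β i) + 2*α)) := by
      apply mul_nonneg (Finset.sum_nonneg fun i _ => sq_nonneg _)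
      exact Real.rpow_nonneg (Real.rpow_nonneg (Finset.sum_nonneg fun i _ =>
        Real.rpow_nonneg (abs_nonneg _) _) _) _
    rw [Real.norm_eq_abs, abs_of_nonneg hfnn]
    have hGy : G y = ∑ j, ∏ i, |y i| ^ p j i := by
      apply Finset.sum_congr rfl
      intro j _
      apply Finset.prod_congr rfl
      intro i _
      rw [Set.indicator_of_mem]
      rw [Set.mem_Ioo, ← abs_lt]
      exact habs i
    rw [hGy]
    exact key y hy
end
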